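/- Let f, g, h : ℝ → ℝ be smooth, and define on ℝ³ (coordinates u, v, w with v ≠ 0) the skew-symmetric matrix ω^{12} = f(w), ω^{13} = (h(w) − u·g(w))/v, ω^{23} = g(w). Then ω satisfies the Jacobi identity ∑_s ( ω^{is} ∂_s ω^{jk} + ω^{js} ∂_s ω^{ki} + ω^{ks} ∂_s ω^{ij} ) = 0 on the region v ≠ 0 if and only if h(w) g'(w) − g(w) ( f(w) + h'(w) ) = 0 for all w. -/

import Mathlib

set_option maxHeartbeats 1000000
/-- Partial derivative of `F` in the direction of the `s`-th coordinate of `ℝ³`. -/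
noncomputable def pd3 (s : Fin 3) (F : (Fin 3 → ℝ) → ℝ) (x : Fin 3 → ℝ) : ℝ :=
  fderiv ℝ F x (Pi.single s 1)
open ContinuousLinearMap

lemma hasF_comp2 (f : ℝ → ℝ) (hf : ContDiff ℝ (⊤ : ℕ∞) f) (x : Fin 3 → ℝ) :
    HasFDerivAt (fun y : Fin 3 → ℝ => f (y 2))
      (deriv f (x 2) • (proj 2 : (Fin 3 → ℝ) →L[ℝ] ℝ)) x :=
  ((hf.differentiable (by simp) (x 2)).hasDerivAt).comp_hasFDerivAt x
    (proj 2 : (Fin 3 → ℝ) →L[ℝ] ℝ).hasFDerivAt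

lemma pd3_comp2 (f : ℝ → ℝ) (hf : ContDiff ℝ (⊤ : ℕ∞) f) (x : Fin 3 → ℝ) (s : Fin 3) :
    pd3 s (fun y => f (y 2)) x = if s = 2 then deriv f (x 2) else 0 := by
  rw [pd3, (hasF_comp2 f hf x).fderiv]
  fin_cases s <;> simp

lemma pd3_const (c : ℝ) (x : Fin 3 → ℝ) (s : Fin 3) : pd3 s (fun _ => c) x = 0 := by
  simp [pd3]

lemma pd3_neg (F : (Fin 3 → ℝ) → ℝ) (x : Fin 3 → ℝ) (s : Fin 3) :
    pd3 s (fun y => -F y) x = -pd3 s F x := by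
  simp [pd3, fderiv_neg]

lemma hasF_phi (g h : ℝ → ℝ) (hg : ContDiff ℝ (⊤ : ℕ∞) g) (hh : ContDiff ℝ (⊤ : ℕ∞) h)
    (x : Fin 3 → ℝ) (hx : x 1 ≠ 0) :
    HasFDerivAt (fun y : Fin 3 → ℝ => (h (y 2) - y 0 * g (y 2)) / y 1)
      ((h (x 2) - x 0 * g (x 2)) • ((-((x 1) ^ 2)⁻¹) • (proj 1 : (Fin 3 → ℝ) →L[ℝ] ℝ))
        + (x 1)⁻¹ • ((deriv h (x 2) • (proj 2 : (Fin 3 → ℝ) →L[ℝ] ℝ)) -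
          (x 0 • (deriv g (x 2) • (proj 2 : (Fin 3 → ℝ) →L[ℝ] ℝ))
            + g (x 2) • (proj 0 : (Fin 3 → ℝ) →L[ℝ] ℝ)))) x := by
  have hA : HasFDerivAt (fun y : Fin 3 → ℝ => h (y 2) - y 0 * g (y 2))
      ((deriv h (x 2) • (proj 2 : (Fin 3 → ℝ) →L[ℝ] ℝ)) -
        (x 0 • (deriv g (x 2) • (proj 2 : (Fin 3 → ℝ) →L[ℝ] ℝ))
          + g (x 2) • (proj 0 : (Fin 3 → ℝ) →L[ℝ] ℝ))) x :=
    (hasF_comp2 h hh x).sub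
      ((proj 0 : (Fin 3 → ℝ) →L[ℝ] ℝ).hasFDerivAt.mul (hasF_comp2 g hg x))
  have hI : HasFDerivAt (fun y : Fin 3 → ℝ => (y 1)⁻¹)
      ((-((x 1) ^ 2)⁻¹) • (proj 1 : (Fin 3 → ℝ) →L[ℝ] ℝ)) x :=
    (hasDerivAt_inv hx).comp_hasFDerivAt x (proj 1 : (Fin 3 → ℝ) →L[ℝ] ℝ).hasFDerivAt
  simpa [div_eq_mul_inv, Pi.mul_def] using hA.mul hI

lemma pd3_phi (g h : ℝ → ℝ) (hg : ContDiff ℝ (⊤ : ℕ∞) g) (hh : ContDiff ℝ (⊤ : ℕ∞) h)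
    (x : Fin 3 → ℝ) (hx : x 1 ≠ 0) (s : Fin 3) :
    pd3 s (fun y => (h (y 2) - y 0 * g (y 2)) / y 1) x =
      if s = 0 then -g (x 2) / x 1
      else if s = 1 then -((h (x 2) - x 0 * g (x 2)) / (x 1) ^ 2)
      else (deriv h (x 2) - x 0 * deriv g (x 2)) / x 1 := by
  rw [pd3, (hasF_phi g h hg hh x hx).fderiv]
  fin_cases s <;> simp <;> field_simp

/-- For the skew-symmetric matrix `ω^{12} = f(w)`, `ω^{13} = (h(w) − u·g(w))/v`,
`ω^{23} = g(w)` on the region `v ≠ 0` of `ℝ³`, the Jacobi identity holds if and only if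
`h g' − g (f + h') = 0`. -/
theorem stmt4 (f g h : ℝ → ℝ)
    (hf : ContDiff ℝ (⊤ : ℕ∞) f) (hg : ContDiff ℝ (⊤ : ℕ∞) g) (hh : ContDiff ℝ (⊤ : ℕ∞) h) :
    (∀ x : Fin 3 → ℝ, x 1 ≠ 0 → ∀ i j k : Fin 3,
      (fun (ω : (Fin 3 → ℝ) → Matrix (Fin 3) (Fin 3) ℝ) =>
        ∑ s : Fin 3,
          (ω x i s * pd3 s (fun y => ω y j k) x
            + ω x j s * pd3 s (fun y => ω y k i) x
            + ω x k s * pd3 s (fun y => ω y i j) x))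
      (fun y => !![0, f (y 2), (h (y 2) - y 0 * g (y 2)) / y 1;
                   -f (y 2), 0, g (y 2);
                   -((h (y 2) - y 0 * g (y 2)) / y 1), -g (y 2), 0]) = 0)
    ↔ (∀ w : ℝ, h w * deriv g w - g w * (f w + deriv h w) = 0) := by
  constructor
  · intro H w
    have hx : (![0, 1, w] : Fin 3 → ℝ) 1 ≠ 0 := by norm_num
    have H' := H ![0, 1, w] hx 0 1 2
    simp only [Fin.sum_univ_three, Matrix.of_apply, Matrix.cons_val', Matrix.cons_val_zero,
      Matrix.cons_val_one, Matrix.head_cons, Matrix.head_fin_const, Matrix.empty_val',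
      Matrix.cons_val_fin_one, Matrix.cons_val_two, Matrix.tail_cons] at H'
    simp only [pd3_neg, pd3_const, pd3_comp2 f hf, pd3_comp2 g hg, pd3_comp2 h hh,
      pd3_phi g h hg hh _ hx, Matrix.cons_val_zero, Matrix.cons_val_one, Matrix.head_cons,
      Matrix.cons_val_two, Matrix.tail_cons] at H'
    simp only [Fin.reduceEq, if_true, if_false, reduceIte] at H'
    norm_num at H'
    linarith [H']
  · intro H x hx i j k
    have hw := H (x 2)
    fin_cases i <;> fin_cases j <;> fin_cases k <;>
      simp only [Fin.zero_eta, Fin.mk_one, Fin.reduceFinMk, Fin.isValue] <;>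
      simp only [Fin.sum_univ_three, Matrix.of_apply, Matrix.cons_val', Matrix.cons_val_zero,
        Matrix.cons_val_one, Matrix.head_cons, Matrix.head_fin_const, Matrix.empty_val',
        Matrix.cons_val_fin_one, Matrix.cons_val_two, Matrix.tail_cons, Fin.isValue] <;>
      simp only [pd3_neg, pd3_const, pd3_comp2 f hf, pd3_comp2 g hg, pd3_comp2 h hh,
        pd3_phi g h hg hh x hx, Fin.reduceEq, reduceIte] <;>
      norm_num <;>
      try field_simp
    all_goals first
        | linear_combination hw
        | linear_combination -hw
        | linear_combination x 1 * hw
        | linear_combination -(x 1) * hw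
        | linear_combination (x 1)^2 * hw
        | linear_combination -(x 1)^2 * hw
        | linear_combination 2 * hw
        | ring
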